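/- For integers m, p, q ≥ 1, if n = 1 then the convolution sequence (r_i)_{i≥1} is unimodal. -/

import Mathlib

/-- The sequence of `p` ones followed by the binomial coefficients
`choose m 0, …, choose m m` and then zeros (indexed from 1; the value at 0 is 0). -/
def broomSeq (m p : ℕ) : ℕ → ℕ := fun i =>
  if 1 ≤ i ∧ i ≤ p then 1
  else if p + 1 ≤ i ∧ i ≤ p + m + 1 then Nat.choose m (i - p - 1)
  else 0

/-- The convolution `r_i = ∑_{j=1}^{i} s_j * t_{i+1-j}` of the two broom sequences. -/
def convSeq (m n p q : ℕ) : ℕ → ℕ := fun i =>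
  ∑ j ∈ Finset.Icc 1 i, broomSeq m p j * broomSeq n q (i + 1 - j)

/-- A sequence (indexed from 1) is unimodal if for some `k ≥ 1` it is
nondecreasing up to `k` and nonincreasing from `k` on. -/
def Unimodal (a : ℕ → ℕ) : Prop :=
  ∃ k : ℕ, 1 ≤ k ∧ (∀ i, 1 ≤ i → i < k → a i ≤ a (i + 1)) ∧ (∀ i, k ≤ i → a (i + 1) ≤ a i)

/-!
With `n = 1` the second broom is the indicator of `[1, q + 2]`, so `r_i` is the sum of `s` over
the sliding window `[i - q - 1, i]`, and `r_{i+1} - r_i = s_{i+1} - s_{i-q-1}`. The broom `s` is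
unimodal with peak at `p + 1 + m / 2`. Once the leading edge of the window has passed the peak
and carries less than the trailing edge, this stays so: the leading edge only decreases, and the
trailing edge increases until it passes the peak itself. Hence after its first descent `r` never
increases again.
-/

open Finset Filter

lemma Nat.choose_succ_le_of_half_le {n k : ℕ} (h : n / 2 ≤ k) :
    n.choose (k + 1) ≤ n.choose k :=
  Nat.le_of_mul_le_mul_right
    (by rw [Nat.choose_succ_right_eq]; exact Nat.mul_le_mul_left _ (by omega)) k.succ_pos

lemma apply_le_apply_of_drop {α β : Type*} [LinearOrder α] [LinearOrder β]
    {s : α → β} {K : α} (hmono : MonotoneOn s (Set.Iic K)) (hanti : AntitoneOn s (Set.Ici K))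
    {a b a' b' : α} (hab : a ≤ b) (hdrop : s b < s a) (ha : a ≤ a') (hb : b ≤ b')
    (hab' : a' ≤ b') : s b' ≤ s a' := by
  have hKb : K < b := lt_of_not_ge fun hbK =>
    hdrop.not_ge (hmono (hab.trans hbK) hbK hab)
  rcases le_total a' K with haK | hKa
  · calc s b' ≤ s b := hanti hKb.le (hKb.le.trans hb) hb
      _ ≤ s a := hdrop.le
      _ ≤ s a' := hmono (ha.trans haK) haK ha
  · exact hanti hKa (hKa.trans hab') hab'

lemma unimodal_of_antitone_after_drop {a : ℕ → ℕ}
    (hdrop : ∀ i, 1 ≤ i → a (i + 1) < a i → ∀ j, i ≤ j → a (j + 1) ≤ a j)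
    (hzero : ∀ᶠ i in atTop, a i = 0) : Unimodal a := by
  classical
  by_cases h : ∃ i, 1 ≤ i ∧ a (i + 1) < a i
  · obtain ⟨hk, hk_drop⟩ := Nat.find_spec h
    refine ⟨Nat.find h, hk, fun i hi hik => ?_, hdrop _ hk hk_drop⟩
    exact not_lt.mp fun hlt => Nat.find_min h hik ⟨hi, hlt⟩
  · simp only [not_exists, not_and, not_lt] at h
    obtain ⟨N, hN⟩ := eventually_atTop.mp hzero
    have hmono : MonotoneOn a (Set.Ici 1) :=
      monotoneOn_of_le_add_one Set.ordConnected_Ici fun i _ hi _ => h i hi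
    refine ⟨1, le_rfl, fun i hi hi1 => absurd hi1 (by omega), fun i hi => ?_⟩
    calc a (i + 1) ≤ a (max N (i + 1)) :=
          hmono (Set.mem_Ici.mpr (by omega)) (Set.mem_Ici.mpr (by omega)) (le_max_right _ _)
      _ = 0 := hN _ (le_max_left _ _)
      _ ≤ a i := Nat.zero_le _

def windowSum {M : Type*} [AddCommMonoid M] (s : ℕ → M) (w i : ℕ) : M :=
  ∑ j ∈ Icc (i - w) i, s j

-- Truncated subtraction makes the window `[0, i]` for `i < w`; `s 0 = 0` keeps the identity true.
lemma windowSum_succ_add {M : Type*} [AddCommMonoid M] {s : ℕ → M} (hs : s 0 = 0) (w i : ℕ) :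
    windowSum s w (i + 1) + s (i - w) = windowSum s w i + s (i + 1) := by
  unfold windowSum
  rcases le_or_gt w i with hw | hw
  · rw [show i + 1 - w = i - w + 1 by omega, Icc_add_one_left_eq_Ioc,
      sum_Ioc_succ_top (by omega), Icc_eq_cons_Ioc (by omega), sum_cons]
    abel
  · rw [show i + 1 - w = 0 by omega, show i - w = 0 by omega, sum_Icc_succ_top (by omega), hs,
      add_zero]

lemma windowSum_succ_le_of_drop {s : ℕ → ℕ} {K : ℕ} (hs : s 0 = 0)
    (hmono : MonotoneOn s (Set.Iic K)) (hanti : AntitoneOn s (Set.Ici K)) {w i : ℕ}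
    (hdrop : windowSum s w (i + 1) < windowSum s w i) {j : ℕ} (hij : i ≤ j) :
    windowSum s w (j + 1) ≤ windowSum s w j := by
  have hi := windowSum_succ_add hs w i
  have hj := windowSum_succ_add hs w j
  have hs_drop : s (i + 1) < s (i - w) := by omega
  have := apply_le_apply_of_drop hmono hanti (by omega) hs_drop (Nat.sub_le_sub_right hij w)
    (by omega : i + 1 ≤ j + 1) (by omega)
  omega

section broomSeq

variable {m p i : ℕ}

@[simp]
lemma broomSeq_zero (m p : ℕ) : broomSeq m p 0 = 0 := by
  simp [broomSeq]

lemma broomSeq_of_le (h₁ : 1 ≤ i) (h₂ : i ≤ p) : broomSeq m p i = 1 := by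
  simp [broomSeq, h₁, h₂]

-- Past `p + m + 1` the binomial coefficient vanishes, so no upper bound is needed.
lemma broomSeq_of_lt (h : p < i) : broomSeq m p i = m.choose (i - p - 1) := by
  unfold broomSeq
  rw [if_neg (by omega)]
  split_ifs with h'
  · rfl
  · exact (Nat.choose_eq_zero_of_lt (by omega)).symm

lemma broomSeq_eq_zero_of_lt (h : p + m + 1 < i) : broomSeq m p i = 0 := by
  rw [broomSeq_of_lt (by omega), Nat.choose_eq_zero_of_lt (by omega)]

lemma broomSeq_one (q i : ℕ) : broomSeq 1 q i = if 1 ≤ i ∧ i ≤ q + 2 then 1 else 0 := by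
  rcases Nat.lt_or_ge q i with h | h
  · rw [broomSeq_of_lt h]
    split_ifs with hiq
    · obtain h' | h' : i - q - 1 = 0 ∨ i - q - 1 = 1 := by omega
      all_goals simp [h']
    · exact Nat.choose_eq_zero_of_lt (by omega)
  · rcases Nat.eq_zero_or_pos i with rfl | hi
    · simp
    · rw [broomSeq_of_le hi h, if_pos (by omega)]

lemma broomSeq_monotoneOn (m p : ℕ) : MonotoneOn (broomSeq m p) (Set.Iic (p + 1 + m / 2)) := by
  refine monotoneOn_of_le_add_one Set.ordConnected_Iic fun i _ _ hi => ?_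
  rw [Set.mem_Iic] at hi
  rcases Nat.eq_zero_or_pos i with rfl | hi₀
  · simp
  rcases lt_or_ge i p with hip | hpi
  · rw [broomSeq_of_le hi₀ hip.le, broomSeq_of_le (by omega) (by omega : i + 1 ≤ p)]
  rw [broomSeq_of_lt (by omega : p < i + 1)]
  rcases hpi.eq_or_lt with rfl | hpi
  · simp [broomSeq_of_le hi₀ le_rfl]
  rw [broomSeq_of_lt hpi, show i + 1 - p - 1 = i - p - 1 + 1 by omega]
  exact Nat.choose_le_succ_of_lt_half_left (by omega)

lemma broomSeq_antitoneOn (m p : ℕ) : AntitoneOn (broomSeq m p) (Set.Ici (p + 1 + m / 2)) := by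
  refine antitoneOn_of_add_one_le Set.ordConnected_Ici fun i _ hi _ => ?_
  rw [Set.mem_Ici] at hi
  rw [broomSeq_of_lt (by omega), broomSeq_of_lt (by omega),
    show i + 1 - p - 1 = i - p - 1 + 1 by omega]
  exact Nat.choose_succ_le_of_half_le (by omega)

end broomSeq

lemma convSeq_eq_zero_of_lt {m n p q i : ℕ} (h : p + m + q + n + 1 < i) :
    convSeq m n p q i = 0 := by
  refine sum_eq_zero fun j hj => ?_
  rw [mem_Icc] at hj
  rcases le_or_gt j (p + m + 1) with hj' | hj'
  · rw [broomSeq_eq_zero_of_lt (m := n) (by omega), mul_zero]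
  · rw [broomSeq_eq_zero_of_lt hj', zero_mul]

lemma convSeq_one_eq_windowSum (m p q : ℕ) :
    convSeq m 1 p q = windowSum (broomSeq m p) (q + 1) := by
  ext i
  unfold convSeq windowSum
  simp only [broomSeq_one, mul_ite, mul_one, mul_zero]
  rw [← sum_filter]
  refine sum_subset (fun j hj => ?_) (fun j hj hj' => ?_)
  · simp only [mem_filter, mem_Icc] at hj ⊢
    omega
  · simp only [mem_filter, mem_Icc, not_and] at hj hj'
    obtain rfl : j = 0 := by omega
    exact broomSeq_zero m p

theorem convSeq_unimodal_of_n_eq_one_general (m p q : ℕ) :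
    Unimodal (convSeq m 1 p q) := by
  refine unimodal_of_antitone_after_drop ?_
    ((eventually_gt_atTop (p + m + q + 2)).mono fun i hi => convSeq_eq_zero_of_lt hi)
  rw [convSeq_one_eq_windowSum]
  exact fun i _ hdrop j hij => windowSum_succ_le_of_drop (broomSeq_zero m p)
    (broomSeq_monotoneOn m p) (broomSeq_antitoneOn m p) hdrop hij

theorem convSeq_unimodal_of_n_eq_one (m p q : ℕ)
    (hm : 1 ≤ m) (hp : 1 ≤ p) (hq : 1 ≤ q) :
    Unimodal (convSeq m 1 p q) :=
  convSeq_unimodal_of_n_eq_one_general m p q
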